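/- There exists a strongly opaque secret set for system Γ with X_0 = ℝ^n (i.e., there exist nonempty disjoint sets X_s, X_ns with every element of X_s opaque with respect to X_ns) if and only if the weakly unobservable subspace V(Γ) is nonzero. -/
import Mathlib


open Matrix

/-- State trajectory of the LTI system x(k+1) = A x(k) + B u(k). -/
noncomputable def traj {n p : ℕ} (A : Matrix (Fin n) (Fin n) ℝ) (B : Matrix (Fin n) (Fin p) ℝ)
    (u : ℕ → Fin p → ℝ) (x0 : Fin n → ℝ) : ℕ → Fin n → ℝ
  | 0 => x0
  | k + 1 => A.mulVec (traj A B u x0 k) + B.mulVec (u k)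

/-- Output y(k) = C x(k) + D u(k). -/
noncomputable def outSeq {n p m : ℕ} (A : Matrix (Fin n) (Fin n) ℝ) (B : Matrix (Fin n) (Fin p) ℝ)
    (C : Matrix (Fin m) (Fin n) ℝ) (D : Matrix (Fin m) (Fin p) ℝ)
    (u : ℕ → Fin p → ℝ) (x0 : Fin n → ℝ) (k : ℕ) : Fin m → ℝ :=
  C.mulVec (traj A B u x0 k) + D.mulVec (u k)

/-- Weakly unobservable subspace: states from which some input sequence keeps the output
identically zero. -/
noncomputable def wus {n p m : ℕ} (A : Matrix (Fin n) (Fin n) ℝ) (B : Matrix (Fin n) (Fin p) ℝ)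
    (C : Matrix (Fin m) (Fin n) ℝ) (D : Matrix (Fin m) (Fin p) ℝ) : Set (Fin n → ℝ) :=
  {x | ∃ u : ℕ → Fin p → ℝ, ∀ k : ℕ, outSeq A B C D u x k = 0}

/-- Opacity of the secret initial state `xs` with respect to the non-secret initial state `xns`:
for every input sequence applied from `xs` there is an input sequence from `xns` producing the
same output sequence. -/
noncomputable def isOpaque {n p m : ℕ} (A : Matrix (Fin n) (Fin n) ℝ) (B : Matrix (Fin n) (Fin p) ℝ)
    (C : Matrix (Fin m) (Fin n) ℝ) (D : Matrix (Fin m) (Fin p) ℝ)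
    (xs xns : Fin n → ℝ) : Prop :=
  ∀ us : ℕ → Fin p → ℝ, ∃ uns : ℕ → Fin p → ℝ,
    ∀ k : ℕ, outSeq A B C D us xs k = outSeq A B C D uns xns k

lemma traj_sub {n p : ℕ} (A : Matrix (Fin n) (Fin n) ℝ) (B : Matrix (Fin n) (Fin p) ℝ)
    (u u' : ℕ → Fin p → ℝ) (x0 x0' : Fin n → ℝ) :
    ∀ k, traj A B (fun k => u k - u' k) (x0 - x0') k = traj A B u x0 k - traj A B u' x0' k
  | 0 => rfl
  | k + 1 => by
    simp only [traj, traj_sub A B u u' x0 x0' k, Matrix.mulVec_sub]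
    rw [sub_add_sub_comm]

lemma outSeq_sub {n p m : ℕ} (A : Matrix (Fin n) (Fin n) ℝ) (B : Matrix (Fin n) (Fin p) ℝ)
    (C : Matrix (Fin m) (Fin n) ℝ) (D : Matrix (Fin m) (Fin p) ℝ)
    (u u' : ℕ → Fin p → ℝ) (x0 x0' : Fin n → ℝ) (k : ℕ) :
    outSeq A B C D (fun k => u k - u' k) (x0 - x0') k
      = outSeq A B C D u x0 k - outSeq A B C D u' x0' k := by
  simp only [outSeq, traj_sub, Matrix.mulVec_sub]
  rw [sub_add_sub_comm]

lemma zero_mem_wus {n p m : ℕ} (A : Matrix (Fin n) (Fin n) ℝ) (B : Matrix (Fin n) (Fin p) ℝ)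
    (C : Matrix (Fin m) (Fin n) ℝ) (D : Matrix (Fin m) (Fin p) ℝ) :
    (0 : Fin n → ℝ) ∈ wus A B C D := by
  refine ⟨0, fun k => ?_⟩
  have htraj : ∀ k, traj A B (0 : ℕ → Fin p → ℝ) (0 : Fin n → ℝ) k = 0 := by
    intro k
    induction k with
    | zero => rfl
    | succ k ih => simp [traj, ih]
  simp [outSeq, htraj]

lemma opaque_of_sub_mem {n p m : ℕ} (A : Matrix (Fin n) (Fin n) ℝ) (B : Matrix (Fin n) (Fin p) ℝ)
    (C : Matrix (Fin m) (Fin n) ℝ) (D : Matrix (Fin m) (Fin p) ℝ) {xs xns : Fin n → ℝ}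
    (h : xs - xns ∈ wus A B C D) : isOpaque A B C D xs xns := by
  obtain ⟨u0, hu0⟩ := h
  intro us
  refine ⟨fun k => us k - u0 k, fun k => ?_⟩
  have := outSeq_sub A B C D us u0 xs (xs - xns) k
  rw [hu0 k] at this
  have hx : xs - (xs - xns) = xns := by abel
  rw [hx] at this
  rw [this]
  simp

lemma sub_mem_of_opaque {n p m : ℕ} (A : Matrix (Fin n) (Fin n) ℝ) (B : Matrix (Fin n) (Fin p) ℝ)
    (C : Matrix (Fin m) (Fin n) ℝ) (D : Matrix (Fin m) (Fin p) ℝ) {xs xns : Fin n → ℝ}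
    (h : isOpaque A B C D xs xns) : xs - xns ∈ wus A B C D := by
  obtain ⟨uns, huns⟩ := h 0
  refine ⟨fun k => (0 : ℕ → Fin p → ℝ) k - uns k, fun k => ?_⟩
  rw [outSeq_sub A B C D 0 uns xs xns k, huns k, sub_self]

/-- There exists a strongly opaque secret set (nonempty disjoint Xs, Xns with every element of
Xs opaque w.r.t. Xns) iff the weakly unobservable subspace is nonzero. -/
theorem exists_strongly_opaque_iff_wus_ne_zero {n p m : ℕ}
    (A : Matrix (Fin n) (Fin n) ℝ) (B : Matrix (Fin n) (Fin p) ℝ)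
    (C : Matrix (Fin m) (Fin n) ℝ) (D : Matrix (Fin m) (Fin p) ℝ) :
    (∃ Xs Xns : Set (Fin n → ℝ), Xs.Nonempty ∧ Xns.Nonempty ∧ Disjoint Xs Xns ∧
        ∀ xs ∈ Xs, ∃ xns ∈ Xns, isOpaque A B C D xs xns) ↔
      wus A B C D ≠ {0} := by
  constructor
  · rintro ⟨Xs, Xns, ⟨xs, hxs⟩, _, hdisj, hop⟩ hw
    obtain ⟨xns, hxns, hopq⟩ := hop xs hxs
    have hmem := sub_mem_of_opaque A B C D hopq
    rw [hw] at hmem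
    have : xs = xns := by
      have := Set.mem_singleton_iff.mp hmem
      exact sub_eq_zero.mp this
    exact Set.disjoint_left.mp hdisj hxs (this ▸ hxns)
  · intro hw
    have h0 := zero_mem_wus A B C D
    obtain ⟨v, hv, hvne⟩ : ∃ v ∈ wus A B C D, v ≠ 0 := by
      by_contra hc
      push_neg at hc
      apply hw
      ext x
      simp only [Set.mem_singleton_iff]
      exact ⟨fun hx => hc x hx, fun hx => hx ▸ h0⟩
    refine ⟨{v}, {0}, ⟨v, rfl⟩, ⟨0, rfl⟩, ?_, ?_⟩
    · simp [Set.disjoint_singleton, hvne]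
    · rintro xs rfl
      exact ⟨0, rfl, opaque_of_sub_mem A B C D (by simpa using hv)⟩
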